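/- arXiv:2503.19618 — 2 statements merged into one kernel-verified Lean document; each statement's English description precedes it below -/
import Mathlib

section
/- Variance decomposition: Var_P(g_pg) = ∑_{y ∈ (C × A)^n} P y * (g_pg y − g_vr (chains y))² + Var_Q(g_vr), where chains y = (c_1,…,c_n) for y = ((c_1,a_1),…,(c_n,a_n)). -/
/-!
Under `P` the chain vector has law `Q`, and given the chains `c` the answers are independent
with laws `κ θ₀ (c i)`. Averaging `g_pg` over the answers gives `g_vr c`: the answer scores have
conditional mean zero, `κ * (d/dθ) log κ = dκ/dθ` turns the score times the reward into the
derivative of `κ θ (c i) a*`, and the leave-one-out baseline `w_i` does not involve the `i`-th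
answer, so its product with the `i`-th score factorises into conditional means. The identity
is then the law of total variance.
-/

open Finset

section ProductWeights

variable {ι β : Type*} [Fintype ι] [DecidableEq ι] [Fintype β]

theorem sum_prod_mul_prod (μ F : ι → β → ℝ) :
    ∑ a : ι → β, (∏ k, μ k (a k)) * ∏ k, F k (a k) = ∏ k, ∑ b, μ k b * F k b := by
  simp only [← prod_mul_distrib, Fintype.prod_sum]

variable {μ : ι → β → ℝ} (hμ : ∀ k, ∑ b, μ k b = 1)
include hμ

theorem sum_prod_mul_apply (i : ι) (f : β → ℝ) :
    ∑ a : ι → β, (∏ k, μ k (a k)) * f (a i) = ∑ b, μ i b * f b := by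
  have h := sum_prod_mul_prod μ (fun k b => if k = i then f b else 1)
  simp only [prod_ite_eq', mem_univ, if_true] at h
  rw [h, prod_eq_single i (fun k _ hk => by simp [hk, hμ k]) (by simp)]
  simp

theorem sum_prod_mul_apply_mul_apply {i j : ι} (hij : i ≠ j) (f g : β → ℝ) :
    ∑ a : ι → β, (∏ k, μ k (a k)) * (f (a i) * g (a j)) =
      (∑ b, μ i b * f b) * ∑ b, μ j b * g b := by
  have h := sum_prod_mul_prod μ
    (fun k b => (if k = i then f b else 1) * (if k = j then g b else 1))
  simp only [prod_mul_distrib, prod_ite_eq', mem_univ, if_true] at h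
  rw [h, prod_eq_mul_of_mem i j (mem_univ _) (mem_univ _) hij
    (fun k _ hk => by simp [hk.1, hk.2, hμ k])]
  simp [hij, hij.symm]

theorem sum_prod_mul_sum_mul_sub_leaveOneOut (f : ι → β → ℝ) (r : β → ℝ) (e : ℝ) :
    ∑ a : ι → β, (∏ k, μ k (a k)) *
        ∑ i, f i (a i) * (r (a i) - e * ∑ j ∈ univ.erase i, r (a j)) =
      ∑ i, ((∑ b, μ i b * (f i b * r b)) -
        e * (∑ b, μ i b * f i b) * ∑ j ∈ univ.erase i, ∑ b, μ j b * r b) := by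
  conv_lhs => enter [2, a]; rw [mul_sum]
  rw [sum_comm]
  refine sum_congr rfl fun i _ => ?_
  have expand : ∀ a : ι → β,
      (∏ k, μ k (a k)) * (f i (a i) * (r (a i) - e * ∑ j ∈ univ.erase i, r (a j))) =
        (∏ k, μ k (a k)) * (f i (a i) * r (a i)) -
          e * ∑ j ∈ univ.erase i, (∏ k, μ k (a k)) * (f i (a i) * r (a j)) := by
    intro a; rw [← mul_sum, ← mul_sum]; ring
  rw [sum_congr rfl fun a _ => expand a, sum_sub_distrib, ← mul_sum, sum_comm (s := univ),
    sum_prod_mul_apply hμ i (fun b => f i b * r b), mul_assoc]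
  congr 2
  rw [mul_sum]
  refine sum_congr rfl fun j hj => ?_
  exact sum_prod_mul_apply_mul_apply hμ (ne_of_mem_erase hj).symm (f i) r

end ProductWeights

section Score

open Real

theorem mul_deriv_log {f : ℝ → ℝ} {x : ℝ} (hf : DifferentiableAt ℝ f x) (hx : f x ≠ 0) :
    f x * deriv (fun y => log (f y)) x = deriv f x := by
  rw [deriv.log hf hx]
  field_simp

variable {β : Type*} [Fintype β] {p : ℝ → β → ℝ} {x : ℝ}

theorem sum_mul_deriv_log_eq_zero (hp : ∀ y, ∑ b, p y b = 1) (hx : ∀ b, p x b ≠ 0)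
    (hd : ∀ b, DifferentiableAt ℝ (fun y => p y b) x) :
    ∑ b, p x b * deriv (fun y => log (p y b)) x = 0 := by
  have hconst : (fun y => ∑ b, p y b) = fun _ => 1 := funext hp
  rw [sum_congr rfl fun b _ => mul_deriv_log (hd b) (hx b), ← deriv_fun_sum fun b _ => hd b,
    hconst, deriv_const]

end Score

theorem sum_prod_mul_score_mul_advantage {ι β : Type*} [Fintype ι] [DecidableEq ι] [Fintype β]
    [DecidableEq β] {q : ℝ → ι → β → ℝ} {θ₀ : ℝ} (hq : ∀ θ i, ∑ b, q θ i b = 1)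
    (hq₀ : ∀ i b, q θ₀ i b ≠ 0) (hqd : ∀ i b, DifferentiableAt ℝ (fun θ => q θ i b) θ₀)
    (S : ι → ℝ) (bstar : β) (e : ℝ) :
    ∑ a : ι → β, (∏ k, q θ₀ k (a k)) *
        ∑ i, (S i + deriv (fun θ => Real.log (q θ i (a i))) θ₀) *
          ((if a i = bstar then 1 else 0) -
            e * ∑ j ∈ univ.erase i, (if a j = bstar then 1 else 0)) =
      ∑ i, (S i * (q θ₀ i bstar - e * ∑ j ∈ univ.erase i, q θ₀ j bstar) +
        deriv (fun θ => q θ i bstar) θ₀) := by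
  refine (sum_prod_mul_sum_mul_sub_leaveOneOut (hq θ₀)
    (fun i b => S i + deriv (fun θ => Real.log (q θ i b)) θ₀)
    (fun b => if b = bstar then 1 else 0) e).trans (sum_congr rfl fun i _ => ?_)
  have hS : ∑ b, q θ₀ i b * (S i + deriv (fun θ => Real.log (q θ i b)) θ₀) = S i := by
    rw [sum_congr rfl fun b _ => mul_add _ _ _, sum_add_distrib, ← sum_mul, hq, one_mul,
      sum_mul_deriv_log_eq_zero (hq · i) (hq₀ i) (hqd i), add_zero]
  simp only [mul_ite, mul_one, mul_zero, sum_ite_eq', mem_univ, if_true, hS]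
  rw [mul_add, mul_deriv_log (hqd i bstar) (hq₀ i bstar)]
  ring

theorem law_of_total_variance {α β : Type*} [Fintype α] [Fintype β] (μ : α → ℝ) {K : α → β → ℝ}
    (hK : ∀ a, ∑ b, K a b = 1) {g : α → β → ℝ} {h : α → ℝ}
    (hg : ∀ a, ∑ b, K a b * g a b = h a) :
    (∑ a, ∑ b, μ a * K a b * g a b ^ 2) - (∑ a, ∑ b, μ a * K a b * g a b) ^ 2 =
      ∑ a, ∑ b, μ a * K a b * (g a b - h a) ^ 2 +
        ((∑ a, μ a * h a ^ 2) - (∑ a, μ a * h a) ^ 2) := by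
  have hmean : ∀ a, ∑ b, μ a * K a b * g a b = μ a * h a := fun a => by
    simp only [mul_assoc, ← mul_sum, hg]
  have hdev : ∀ a, ∑ b, μ a * K a b * (g a b - h a) ^ 2 =
      ∑ b, μ a * K a b * g a b ^ 2 - μ a * h a ^ 2 := fun a => by
    have hexp : ∀ b, μ a * K a b * (g a b - h a) ^ 2 = μ a * K a b * g a b ^ 2 -
        2 * h a * (μ a * (K a b * g a b)) + μ a * h a ^ 2 * K a b := fun b => by ring
    simp only [hexp, sum_add_distrib, sum_sub_distrib, ← mul_sum, hg, hK]
    ring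
  simp only [hmean, hdev, sum_sub_distrib]
  ring

theorem Fintype.sum_pi_prod {ι α β : Type*} [Fintype ι] [DecidableEq ι] [Fintype α] [Fintype β]
    (G : (ι → α × β) → ℝ) :
    ∑ y, G y = ∑ c : ι → α, ∑ a : ι → β, G (fun i => (c i, a i)) := by
  rw [← Fintype.sum_prod_type']
  exact Fintype.sum_equiv (Equiv.arrowProdEquivProdArrow ι (fun _ => α) (fun _ => β)) _ _
    fun _ => rfl

theorem variance_decomposition_of_pg_general
    {C A : Type*} [Fintype C] [Fintype A] [DecidableEq A]
    (θ₀ : ℝ) (astar : A)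
    (π : ℝ → C → ℝ) (κ : ℝ → C → A → ℝ)
    (hκ1 : ∀ θ c, ∑ a, κ θ c a = 1)
    (hκpos : ∀ c a, 0 < κ θ₀ c a)
    (hκdiff : ∀ c a, DifferentiableAt ℝ (fun θ => κ θ c a) θ₀)
    (n : ℕ)
    (gpg : (Fin n → C × A) → ℝ)
    (hgpg : ∀ y, gpg y =
      (1 / (n : ℝ)) *
        ∑ i,
          (deriv (fun θ => Real.log (π θ (y i).1)) θ₀ +
              deriv (fun θ => Real.log (κ θ (y i).1 (y i).2)) θ₀) *
            ((if (y i).2 = astar then (1 : ℝ) else 0) -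
              (1 / ((n : ℝ) - 1)) *
                ∑ j ∈ Finset.univ.erase i, (if (y j).2 = astar then (1 : ℝ) else 0)))
    (gvr : (Fin n → C) → ℝ)
    (hgvr : ∀ c, gvr c =
      (1 / (n : ℝ)) *
        ∑ i,
          (deriv (fun θ => Real.log (π θ (c i))) θ₀ *
              (κ θ₀ (c i) astar -
                (1 / ((n : ℝ) - 1)) * ∑ j ∈ Finset.univ.erase i, κ θ₀ (c j) astar) +
            deriv (fun θ => κ θ (c i) astar) θ₀))
    (P : (Fin n → C × A) → ℝ)
    (hP : ∀ y, P y = ∏ i, (π θ₀ (y i).1 * κ θ₀ (y i).1 (y i).2))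
    (Q : (Fin n → C) → ℝ)
    (hQ : ∀ c, Q c = ∏ i, π θ₀ (c i)) :
    (∑ y : Fin n → C × A, P y * (gpg y) ^ 2) - (∑ y : Fin n → C × A, P y * gpg y) ^ 2 =
      (∑ y : Fin n → C × A, P y * (gpg y - gvr (fun i => (y i).1)) ^ 2) +
        ((∑ c : Fin n → C, Q c * (gvr c) ^ 2) - (∑ c : Fin n → C, Q c * gvr c) ^ 2) := by
  have hPQ : ∀ (c : Fin n → C) (a : Fin n → A),
      P (fun i => (c i, a i)) = Q c * ∏ k, κ θ₀ (c k) (a k) := fun c a => by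
    rw [hP, hQ, ← prod_mul_distrib]
  have hK : ∀ c : Fin n → C, ∑ a : Fin n → A, ∏ k, κ θ₀ (c k) (a k) = 1 := fun c => by
    rw [← Fintype.prod_sum]; exact prod_eq_one fun k _ => hκ1 θ₀ (c k)
  have hmean : ∀ c : Fin n → C,
      ∑ a : Fin n → A, (∏ k, κ θ₀ (c k) (a k)) * gpg (fun i => (c i, a i)) = gvr c :=
    fun c => by
      simp only [hgpg, hgvr, mul_left_comm _ (1 / (n : ℝ)), ← mul_sum]
      rw [sum_prod_mul_score_mul_advantage (fun θ i => hκ1 θ (c i))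
        (fun i b => (hκpos (c i) b).ne') (fun i b => hκdiff (c i) b)]
  simp only [Fintype.sum_pi_prod, hPQ]
  exact law_of_total_variance Q hK hmean

/-- Variance decomposition:
`Var_P(g_pg) = ∑ y, P y * (g_pg y − g_vr (chains y))² + Var_Q(g_vr)`, where
`chains y = (c₁,…,cₙ)` for `y = ((c₁,a₁),…,(cₙ,aₙ))` and
`Var_μ(f) = ∑ x, μ x * (f x)² − (∑ x, μ x * f x)²`. -/
theorem variance_decomposition_of_pg
    {C A : Type*} [Fintype C] [Fintype A] [Nonempty C] [Nonempty A] [DecidableEq A]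
    (θ₀ : ℝ) (astar : A)
    (π : ℝ → C → ℝ) (κ : ℝ → C → A → ℝ)
    (hπ0 : ∀ θ c, 0 ≤ π θ c) (hπ1 : ∀ θ, ∑ c, π θ c = 1)
    (hκ0 : ∀ θ c a, 0 ≤ κ θ c a) (hκ1 : ∀ θ c, ∑ a, κ θ c a = 1)
    (hπpos : ∀ c, 0 < π θ₀ c) (hκpos : ∀ c a, 0 < κ θ₀ c a)
    (hπdiff : ∀ c, DifferentiableAt ℝ (fun θ => π θ c) θ₀)
    (hκdiff : ∀ c a, DifferentiableAt ℝ (fun θ => κ θ c a) θ₀)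
    (n : ℕ) (hn : 2 ≤ n)
    (gpg : (Fin n → C × A) → ℝ)
    (hgpg : ∀ y, gpg y =
      (1 / (n : ℝ)) *
        ∑ i,
          (deriv (fun θ => Real.log (π θ (y i).1)) θ₀ +
              deriv (fun θ => Real.log (κ θ (y i).1 (y i).2)) θ₀) *
            ((if (y i).2 = astar then (1 : ℝ) else 0) -
              (1 / ((n : ℝ) - 1)) *
                ∑ j ∈ Finset.univ.erase i, (if (y j).2 = astar then (1 : ℝ) else 0)))
    (gvr : (Fin n → C) → ℝ)
    (hgvr : ∀ c, gvr c =
      (1 / (n : ℝ)) *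
        ∑ i,
          (deriv (fun θ => Real.log (π θ (c i))) θ₀ *
              (κ θ₀ (c i) astar -
                (1 / ((n : ℝ) - 1)) * ∑ j ∈ Finset.univ.erase i, κ θ₀ (c j) astar) +
            deriv (fun θ => κ θ (c i) astar) θ₀))
    (P : (Fin n → C × A) → ℝ)
    (hP : ∀ y, P y = ∏ i, (π θ₀ (y i).1 * κ θ₀ (y i).1 (y i).2))
    (Q : (Fin n → C) → ℝ)
    (hQ : ∀ c, Q c = ∏ i, π θ₀ (c i)) :
    (∑ y : Fin n → C × A, P y * (gpg y) ^ 2) - (∑ y : Fin n → C × A, P y * gpg y) ^ 2 =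
      (∑ y : Fin n → C × A, P y * (gpg y - gvr (fun i => (y i).1)) ^ 2) +
        ((∑ c : Fin n → C, Q c * (gvr c) ^ 2) - (∑ c : Fin n → C, Q c * gvr c) ^ 2) :=
  variance_decomposition_of_pg_general θ₀ astar π κ hκ1 hκpos hκdiff n gpg hgpg gvr hgvr P hP Q hQ
end

section
/- Multi-sample leave-one-out control variates have zero mean against the score: ∑_{(c_1,…,c_n) ∈ C^n} (∏_{i=1}^n π θ₀ c_i) * ∑_{i=1}^n ṽ_i * sc c_i = 0, where ṽ_i = log ( (1/(n−1)) * ∑_{j ≠ i} κ θ₀ c_j a* ). -/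
/-!
The score `θ ↦ log (π θ c)` has zero mean under `π θ₀`, since differentiating `∑ c, π θ c = 1`
gives `∑ c, π θ₀ c * sc c = 0`. The leave-one-out value `ṽ i` does not depend on `cᵢ`, so under the
product measure the `i`-th term factors as `E[sc cᵢ] * E[ṽ i] = 0`.
-/

open Finset

theorem sum_mul_deriv_log_eq_deriv_sum {ι : Type*} [Fintype ι] {p : ℝ → ι → ℝ} {θ₀ : ℝ}
    (hp : ∀ i, p θ₀ i ≠ 0) (hd : ∀ i, DifferentiableAt ℝ (fun θ => p θ i) θ₀) :
    ∑ i, p θ₀ i * deriv (fun θ => Real.log (p θ i)) θ₀ = deriv (fun θ => ∑ i, p θ i) θ₀ := by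
  rw [deriv_fun_sum fun i _ => hd i]
  refine sum_congr rfl fun i _ => ?_
  rw [(hd i).hasDerivAt.log (hp i) |>.deriv, mul_div_cancel₀ _ (hp i)]

theorem sum_mul_deriv_log_eq_zero_s18 {ι : Type*} [Fintype ι] {p : ℝ → ι → ℝ} {θ₀ : ℝ}
    (hsum : ∀ θ, ∑ i, p θ i = 1) (hp : ∀ i, p θ₀ i ≠ 0)
    (hd : ∀ i, DifferentiableAt ℝ (fun θ => p θ i) θ₀) :
    ∑ i, p θ₀ i * deriv (fun θ => Real.log (p θ i)) θ₀ = 0 := by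
  rw [sum_mul_deriv_log_eq_deriv_sum hp hd]
  simp only [hsum, deriv_const']

theorem sum_prod_mul_leaveOneOut_mul_eq_zero {ι C R : Type*} [Fintype ι] [DecidableEq ι]
    [Fintype C] [CommSemiring R] {w g : C → R} (hg : ∑ c, w c * g c = 0) (i : ι)
    (F : ({j // j ≠ i} → C) → R) :
    ∑ cs : ι → C, (∏ j, w (cs j)) * (F (fun j => cs j) * g (cs i)) = 0 := by
  let e := Equiv.funSplitAt i C
  calc ∑ cs : ι → C, (∏ j, w (cs j)) * (F (fun j => cs j) * g (cs i))
      = ∑ p : C × ({j // j ≠ i} → C), (w p.1 * g p.1) * ((∏ j, w (p.2 j)) * F p.2) := by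
        refine Fintype.sum_equiv e _ _ fun cs => ?_
        simp only [e, Equiv.funSplitAt_apply, Fintype.prod_eq_mul_prod_subtype_ne _ i]
        ring
    _ = (∑ c, w c * g c) * ∑ r : {j // j ≠ i} → C, (∏ j, w (r j)) * F r := by
        rw [Fintype.sum_prod_type, sum_mul_sum]
    _ = 0 := by rw [hg, zero_mul]

theorem sum_prod_mul_sum_leaveOneOut_mul_eq_zero {ι C R : Type*} [Fintype ι] [DecidableEq ι]
    [Fintype C] [CommSemiring R] {w g : C → R} (hg : ∑ c, w c * g c = 0)
    (F : ∀ i : ι, ({j // j ≠ i} → C) → R) :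
    ∑ cs : ι → C, (∏ j, w (cs j)) * ∑ i, F i (fun j => cs j) * g (cs i) = 0 := by
  simp only [mul_sum]
  rw [sum_comm]
  exact sum_eq_zero fun i _ => sum_prod_mul_leaveOneOut_mul_eq_zero hg i (F i)

theorem multi_sample_control_variate_zero_mean_general
    {C A : Type*} [Fintype C]
    (θ₀ : ℝ) (astar : A)
    (π : ℝ → C → ℝ) (κ : ℝ → C → A → ℝ)
    (hπ1 : ∀ θ, ∑ c, π θ c = 1)
    (hπpos : ∀ c, 0 < π θ₀ c)
    (hπdiff : ∀ c, DifferentiableAt ℝ (fun θ => π θ c) θ₀)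
    (n : ℕ) :
    ∑ cs : Fin n → C,
        (∏ i, π θ₀ (cs i)) *
          ∑ i,
            Real.log ((1 / ((n : ℝ) - 1)) * ∑ j ∈ Finset.univ.erase i, κ θ₀ (cs j) astar) *
              deriv (fun θ => Real.log (π θ (cs i))) θ₀ = 0 := by
  have hscore := sum_mul_deriv_log_eq_zero_s18 hπ1 (fun c => (hπpos c).ne') hπdiff
  have hloo : ∀ i (cs : Fin n → C), ∑ j ∈ univ.erase i, κ θ₀ (cs j) astar
      = ∑ j : {j // j ≠ i}, κ θ₀ (cs j) astar :=
    fun i cs => sum_subtype _ (fun j => by simp) _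
  simp only [hloo]
  exact sum_prod_mul_sum_leaveOneOut_mul_eq_zero hscore
    fun i r => Real.log (1 / ((n : ℝ) - 1) * ∑ j, κ θ₀ (r j) astar)

/-- Multi-sample leave-one-out control variates have zero mean against the score:
`∑_{c₁,…,cₙ} (∏ i, π θ₀ cᵢ) * ∑ i, ṽ i * sc cᵢ = 0`, where
`ṽ i = log ((1/(n-1)) * ∑_{j ≠ i} κ θ₀ cⱼ a*)` and
`sc c = deriv (fun θ => log (π θ c)) θ₀`. -/
theorem multi_sample_control_variate_zero_mean
    {C A : Type*} [Fintype C] [Fintype A] [Nonempty C] [Nonempty A]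
    (θ₀ : ℝ) (astar : A)
    (π : ℝ → C → ℝ) (κ : ℝ → C → A → ℝ)
    (hπ0 : ∀ θ c, 0 ≤ π θ c) (hπ1 : ∀ θ, ∑ c, π θ c = 1)
    (hκ0 : ∀ θ c a, 0 ≤ κ θ c a) (hκ1 : ∀ θ c, ∑ a, κ θ c a = 1)
    (hπpos : ∀ c, 0 < π θ₀ c) (hκpos : ∀ c a, 0 < κ θ₀ c a)
    (hπdiff : ∀ c, DifferentiableAt ℝ (fun θ => π θ c) θ₀)
    (hκdiff : ∀ c a, DifferentiableAt ℝ (fun θ => κ θ c a) θ₀)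
    (n : ℕ) (hn : 2 ≤ n) :
    ∑ cs : Fin n → C,
        (∏ i, π θ₀ (cs i)) *
          ∑ i,
            Real.log ((1 / ((n : ℝ) - 1)) * ∑ j ∈ Finset.univ.erase i, κ θ₀ (cs j) astar) *
              deriv (fun θ => Real.log (π θ (cs i))) θ₀ = 0 :=
  multi_sample_control_variate_zero_mean_general θ₀ astar π κ hπ1 hπpos hπdiff n
end
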